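/- Let p be a prime, let (A, ϖ) be a perfectoid ring with tilt A♭, and let ϖ♭ ∈ A♭ be a tilt of ϖ. Then A♭ is ϖ♭-adically complete, i.e., A♭ is complete and separated for the adic topology of the ideal generated by ϖ♭. -/

import Mathlib

/-!
Since `p ∈ ϖA`, the ring `A` is also `p`-adically complete, so Teichmüller lifts identify both
`A♭ = lim A/p` and `lim A/ϖ` with the monoid of compatible `p`-power root systems in `A`; in
particular `A♭ ≅ lim A/ϖ` as rings. In `lim A/ϖ` the multiples of `ϖ♭ ^ p ^ n` are exactly the
kernel of the `n`-th coordinate, and with this description a `ϖ♭`-adic Cauchy sequence converges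
coordinatewise, to a unique limit.

The kernel statement reduces to `n = 0`. There the lift `π` of `ϖ♭` has `π 0 = ϖ · unit`, and for
the lift `t` of an element with vanishing `0`-th coordinate, `ϖ ∣ t 0`. Bijectivity of Frobenius
`A/ϖ → A/ϖ^p` gives `π n ∣ t n` for all `n`, and the quotients `t n / π n` can be chosen
compatibly modulo `ϖ`, which is a division by `ϖ♭` in `lim A/ϖ`.
-/

/-- `(A, ϖ)` is a perfectoid ring. -/
structure IsPerfectoid (p : ℕ) (A : Type) [CommRing A] (ϖ : A) : Prop where
  pow_dvd : ϖ ^ p ∣ (p : A)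
  complete : IsAdicComplete (Ideal.span {ϖ}) A
  char : CharP (A ⧸ Ideal.span {(p : A)}) p
  frobenius_surjective : ∀ x : A, ∃ y : A, x - y ^ p ∈ Ideal.span {ϖ ^ p}
  frobenius_injective : ∀ x y : A, x ^ p - y ^ p ∈ Ideal.span {ϖ ^ p} → x - y ∈ Ideal.span {ϖ}

/-- `ϖ♭` is a tilt of `ϖ`. -/
def IsTilt (p : ℕ) [Fact p.Prime] (A : Type) [CommRing A]
    [CharP (A ⧸ Ideal.span {(p : A)}) p] (ϖ : A)
    (ϖb : Perfection (A ⧸ Ideal.span {(p : A)}) p) : Prop :=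
  ∃ u : Aˣ, Perfection.coeff (A ⧸ Ideal.span {(p : A)}) p 0 ϖb =
    Ideal.Quotient.mk (Ideal.span {(p : A)}) ((u : A) * ϖ)

open Ideal Perfection

theorem exists_seq_of_exists_succ {α : Type*} {P : ℕ → α → Prop} {r : α → α → Prop}
    (h0 : ∃ a, P 0 a) (hsucc : ∀ n a, P n a → ∃ b, P (n + 1) b ∧ r b a) :
    ∃ f : ℕ → α, ∀ n, P n (f n) ∧ r (f (n + 1)) (f n) := by
  obtain ⟨a₀, ha₀⟩ := h0
  choose next hnext using hsucc
  let f (n : ℕ) : {a // P n a} :=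
    Nat.rec ⟨a₀, ha₀⟩ (fun n a ↦ ⟨next n a.1 a.2, (hnext n a.1 a.2).1⟩) n
  exact ⟨fun n ↦ (f n).1, fun n ↦ ⟨(f n).2, (hnext n _ (f n).2).2⟩⟩

section CommRing

variable {R : Type*} [CommRing R]

theorem sModEq_span_singleton_pow_iff {a x y : R} {n : ℕ} :
    x ≡ y [SMOD (span {a} ^ n • ⊤ : Submodule R R)] ↔ a ^ n ∣ x - y := by
  rw [SModEq.sub_mem, smul_eq_mul, mul_top, span_singleton_pow, mem_span_singleton]

theorem IsAdicComplete.isUnit_add_of_mem {I : Ideal R} [IsAdicComplete I R] {u x : R}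
    (hu : IsUnit u) (hx : x ∈ I) : IsUnit (u + x) := by
  have := isLocalHom_of_le_jacobson_bot I (IsAdicComplete.le_jacobson_bot I)
  refine isUnit_of_map_unit (Ideal.Quotient.mk I) _ ?_
  rw [map_add, Quotient.eq_zero_iff_mem.mpr hx, add_zero]
  exact hu.map _

theorem isAdicComplete_span_singleton_of_mem {I : Ideal R} [IsAdicComplete I R] {a : R}
    (ha : a ∈ I) : IsAdicComplete (span {a}) R := by
  have hle (n : ℕ) : (span {a} ^ n • ⊤ : Submodule R R) ≤ I ^ n • ⊤ :=
    Submodule.smul_mono_left (pow_right_mono ((span_singleton_le_iff_mem I).mpr ha) n)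
  refine { haus' x hx := IsHausdorff.haus' (I := I) x fun n ↦ (hx n).mono (hle n)
           prec' f hf := ?_ }
  choose d hd using fun n ↦ sModEq_span_singleton_pow_iff.mp (hf (Nat.le_succ n))
  -- `g n k` is the quotient of `f n - f (n + k)` by `a ^ n`, chosen coherently in `k`.
  let g (n k : ℕ) : R := ∑ j ∈ Finset.range k, a ^ j * d (n + j)
  have hfg (n k : ℕ) : f n - f (n + k) = a ^ n * g n k := by
    induction k with
    | zero => simp [g]
    | succ k ih =>
      rw [← add_assoc, ← sub_add_sub_cancel _ (f (n + k)), ih, hd]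
      simp only [g, Finset.sum_range_succ]
      ring
  have hg (n : ℕ) {m k : ℕ} (hmk : m ≤ k) :
      g n m ≡ g n k [SMOD (I ^ m • ⊤ : Submodule R R)] := by
    rw [SModEq.comm, SModEq.sub_mem, smul_eq_mul, mul_top, ← Finset.sum_Ico_eq_sub _ hmk]
    exact sum_mem fun j hj ↦ mul_mem_right _ _
      (pow_le_pow_right (Finset.mem_Ico.mp hj).1 (pow_mem_pow ha j))
  choose G hG using fun n ↦ IsPrecomplete.prec inferInstance (hg n)
  refine ⟨f 0 - G 0, fun n ↦ sModEq_span_singleton_pow_iff.mpr ⟨G n, ?_⟩⟩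
  refine IsHausdorff.eq_iff_smodEq (I := I) |>.mpr fun k ↦ ?_
  calc f n - (f 0 - G 0) ≡ f n - (f 0 - g 0 (n + k)) [SMOD (I ^ k • ⊤ : Submodule R R)] :=
        SModEq.rfl.sub (SModEq.rfl.sub ((hG 0 (n + k)).symm.mono
          (Submodule.smul_mono_left (pow_le_pow_right (Nat.le_add_left k n)))))
    _ = a ^ n * g n k := by
        have h0 := hfg 0 (n + k)
        rw [pow_zero, one_mul, zero_add] at h0
        rw [← h0, ← hfg]
        ring
    _ ≡ a ^ n * G n [SMOD (I ^ k • ⊤ : Submodule R R)] := (hG n k).smul (a ^ n)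

theorem charP_quotient_of_le {p : ℕ} (hp : p.Prime) {I J : Ideal R} (hIJ : I ≤ J)
    (hJ : J ≠ ⊤) [CharP (R ⧸ I) p] : CharP (R ⧸ J) p := by
  have := Quotient.nontrivial_iff.mpr hJ
  rw [CharP.charP_iff_prime_eq_zero hp, ← map_natCast (Quotient.factor hIJ),
    CharP.cast_eq_zero, map_zero]

theorem dvd_sub_pow_sub_sub_pow {p : ℕ} [Fact p.Prime] {a : R}
    [CharP (R ⧸ span {a}) p] (x y : R) : a ∣ (x - y) ^ p - (x ^ p - y ^ p) := by
  rw [← mem_span_singleton, ← Quotient.eq_zero_iff_mem]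
  simp [sub_pow_char]

end CommRing

namespace Perfection

variable {p : ℕ} [Fact p.Prime]

theorem mk_coeff_quotientMulEquiv_symm {R : Type*} [CommRing R] {I : Ideal R} [CharP (R ⧸ I) p]
    [IsAdicComplete I R] (y : Perfection (R ⧸ I) p) (n : ℕ) :
    Ideal.Quotient.mk I (coeffMonoidHom R p n ((quotientMulEquiv p I).symm y)) = coeff _ p n y := by
  rw [← coeff_quotientMulEquiv, MulEquiv.apply_symm_apply]

theorem bijective_map_factor {R : Type*} [CommRing R] {I J : Ideal R} (hIJ : I ≤ J)
    [CharP (R ⧸ I) p] [CharP (R ⧸ J) p] [IsAdicComplete I R] [IsAdicComplete J R] :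
    Function.Bijective (map p (Quotient.factor hIJ)) := by
  have : ⇑(map p (Quotient.factor hIJ)) =
      quotientMulEquiv p J ∘ (quotientMulEquiv p I).symm := by
    funext x
    obtain ⟨y, rfl⟩ := (quotientMulEquiv p I).surjective x
    ext n
    simp
  rw [this]
  exact (quotientMulEquiv p J).bijective.comp (quotientMulEquiv p I).symm.bijective

theorem isAdicComplete_of_pow_dvd_iff {S : Type*} [CommRing S] [CharP S p]
    {ϖ : Perfection S p} (h : ∀ n x, ϖ ^ p ^ n ∣ x ↔ coeff S p n x = 0) :
    IsAdicComplete (span {ϖ}) (Perfection S p) := by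
  have hle (n : ℕ) : n ≤ p ^ n := (Nat.lt_pow_self (Fact.out : p.Prime).one_lt).le
  refine { haus' x hx := ext fun n ↦ ?_
           prec' f hf := ?_ }
  · rw [map_zero, ← h]
    simpa using sModEq_span_singleton_pow_iff.mp (hx (p ^ n))
  have hcoeff (n : ℕ) : coeff S p n (f (p ^ n)) = coeff S p n (f (p ^ (n + 1))) := by
    rw [← sub_eq_zero, ← map_sub, ← h]
    exact sModEq_span_singleton_pow_iff.mp
      (hf (Nat.pow_le_pow_right (Fact.out : p.Prime).pos n.le_succ))
  let y : Perfection S p := ⟨fun n ↦ coeff S p n (f (p ^ n)), fun n ↦ by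
    change coeff S p (n + 1) (f (p ^ (n + 1))) ^ p = coeff S p n (f (p ^ n))
    rw [hcoeff n, coeff_pow_p']⟩
  refine ⟨y, fun n ↦ sModEq_span_singleton_pow_iff.mpr ?_⟩
  have hy : ϖ ^ p ^ n ∣ f (p ^ n) - y := (h n _).mpr (by rw [map_sub, sub_eq_zero]; rfl)
  rw [← sub_add_sub_cancel _ (f (p ^ n))]
  exact dvd_add (sModEq_span_singleton_pow_iff.mp (hf (hle n)))
    ((pow_dvd_pow _ (hle n)).trans hy)

end Perfection

namespace IsPerfectoid

variable {p : ℕ} [Fact p.Prime] {A : Type} [CommRing A] {ϖ : A}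

theorem dvd_natCast (hA : IsPerfectoid p A ϖ) : ϖ ∣ (p : A) :=
  (dvd_pow_self ϖ (Fact.out : p.Prime).ne_zero).trans hA.pow_dvd

theorem isAdicComplete_span_natCast (hA : IsPerfectoid p A ϖ) :
    IsAdicComplete (span {(p : A)}) A :=
  have := hA.complete
  isAdicComplete_span_singleton_of_mem (mem_span_singleton.mpr hA.dvd_natCast)

theorem charP_quotient (hA : IsPerfectoid p A ϖ) : CharP (A ⧸ span {ϖ}) p := by
  have := hA.char
  refine charP_quotient_of_le Fact.out (span_singleton_le_span_singleton.mpr hA.dvd_natCast)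
    fun h ↦ ?_
  have : Subsingleton A := (h ▸ hA.complete).subsingleton
  have := CharP.nontrivial_of_char_ne_one (R := A ⧸ span {(p : A)}) (Fact.out : p.Prime).ne_one
  exact not_subsingleton (A ⧸ span {(p : A)}) inferInstance

variable {π : ℕ → A} {v : Aˣ}

theorem dvd_uniformizer (hπ : ∀ n, π (n + 1) ^ p = π n) (hπ0 : π 0 = ϖ * v) (n : ℕ) :
    π n ∣ ϖ := by
  have hpow : π n ^ p ^ n = ϖ * v :=
    hπ0 ▸ coeffMonoidHom_pow_p_pow_self (⟨π, hπ⟩ : Perfection A p) n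
  exact (dvd_pow_self _ (pow_ne_zero n (Fact.out : p.Prime).ne_zero)).trans
    (hpow ▸ Units.mul_right_dvd.mpr dvd_rfl)

theorem dvd_of_dvd_pow (hA : IsPerfectoid p A ϖ) (hπ : ∀ n, π (n + 1) ^ p = π n)
    (hπ0 : π 0 = ϖ * v) {n : ℕ} {c : A} (hc : π n ∣ c ^ p) :
    π (n + 1) ∣ c := by
  obtain ⟨d, hd⟩ := hc
  obtain ⟨e, he⟩ := hA.frobenius_surjective d
  have hmem : c ^ p - (π (n + 1) * e) ^ p ∈ span {ϖ ^ p} := by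
    rw [show c ^ p - (π (n + 1) * e) ^ p = π n * (d - e ^ p) by rw [mul_pow, hπ, hd]; ring]
    exact mul_mem_left _ _ he
  obtain ⟨z, hz⟩ := mem_span_singleton.mp (hA.frobenius_injective _ _ hmem)
  rw [show c = π (n + 1) * e + ϖ * z by rw [← hz]; ring]
  exact dvd_add (dvd_mul_right _ _) ((dvd_uniformizer hπ hπ0 _).mul_right _)

theorem dvd_of_dvd_pow_pow (hA : IsPerfectoid p A ϖ) (hπ : ∀ n, π (n + 1) ^ p = π n)
    (hπ0 : π 0 = ϖ * v) (n : ℕ) {c : A} (hc : ϖ ∣ c ^ p ^ n) :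
    π n ∣ c := by
  induction n generalizing c with
  | zero => simpa [hπ0] using hc
  | succ n ih => exact dvd_of_dvd_pow hA hπ hπ0 (ih (by rwa [← pow_mul, ← pow_succ']))

/- The quotients `t n / π n` are only defined up to the annihilator of `π n`; this lemma is what
lets them be chosen compatibly in `exists_quotient_succ`. -/
theorem exists_annihilator_succ (hA : IsPerfectoid p A ϖ) (hπ : ∀ n, π (n + 1) ^ p = π n)
    (hπ0 : π 0 = ϖ * v) {n : ℕ} {δ : A} (hδ : π n * δ = 0) :
    ∃ h, π (n + 1) * h = 0 ∧ ϖ ∣ δ - h ^ p := by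
  have := hA.charP_quotient
  have hp := (Fact.out : p.Prime).two_le
  obtain ⟨g, hg⟩ := hA.frobenius_surjective δ
  have hmem : (π (n + 1) * g) ^ p - 0 ^ p ∈ span {ϖ ^ p} := by
    rw [show (π (n + 1) * g) ^ p - 0 ^ p = -(π n * (δ - g ^ p)) by
      rw [mul_pow, hπ, zero_pow (by omega), mul_sub, hδ]; ring]
    exact neg_mem (mul_mem_left _ _ hg)
  obtain ⟨m, hm⟩ := mem_span_singleton.mp (hA.frobenius_injective _ _ hmem)
  obtain ⟨e, he⟩ := dvd_uniformizer hπ hπ0 n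
  rw [← hπ] at he
  set e' := π (n + 1) ^ (p - 1) * e
  have hπe' : π (n + 1) ∣ e' := (dvd_pow_self _ (by omega)).mul_right _
  have he' : ϖ = π (n + 1) * e' := by
    rw [he, ← mul_assoc, ← pow_succ', Nat.sub_add_cancel (by omega)]
  have hϖe' : ϖ ∣ (e' * m) ^ p := by
    rw [mul_pow, he']
    refine Dvd.dvd.mul_right ((mul_dvd_mul_right hπe' e').trans ?_) _
    rw [← sq]
    exact pow_dvd_pow e' hp
  rw [sub_zero] at hm
  refine ⟨g - e' * m, by rw [mul_sub, hm, ← mul_assoc, ← he', sub_self], ?_⟩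
  rw [show δ - (g - e' * m) ^ p
      = (δ - g ^ p) + (e' * m) ^ p - ((g - e' * m) ^ p - (g ^ p - (e' * m) ^ p)) by ring]
  exact dvd_sub (dvd_add ((dvd_pow_self ϖ (by omega)).trans (mem_span_singleton.mp hg)) hϖe')
    (dvd_sub_pow_sub_sub_pow _ _)

theorem exists_quotient_succ (hA : IsPerfectoid p A ϖ) (hπ : ∀ n, π (n + 1) ^ p = π n)
    (hπ0 : π 0 = ϖ * v) {t : ℕ → A} (ht : ∀ n, t (n + 1) ^ p = t n) (ht0 : ϖ ∣ t 0)
    {n : ℕ} {a : A} (ha : t n = π n * a) :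
    ∃ b, t (n + 1) = π (n + 1) * b ∧ ϖ ∣ b ^ p - a := by
  have := hA.charP_quotient
  obtain ⟨q, hq⟩ := dvd_of_dvd_pow_pow hA hπ hπ0 (n + 1) (c := t (n + 1))
    (coeffMonoidHom_pow_p_pow_self (⟨t, ht⟩ : Perfection A p) (n + 1) ▸ ht0)
  obtain ⟨h, hh, hδ⟩ := exists_annihilator_succ hA hπ hπ0 (n := n) (δ := q ^ p - a) (by
    rw [mul_sub, ← ha, ← hπ, ← mul_pow, ← hq, ht, sub_self])
  refine ⟨q - h, by rw [mul_sub, hh, sub_zero, hq], ?_⟩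
  rw [show (q - h) ^ p - a = ((q - h) ^ p - (q ^ p - h ^ p)) + (q ^ p - a - h ^ p) by ring]
  exact dvd_add (dvd_sub_pow_sub_sub_pow _ _) hδ

theorem exists_compatible_quotients (hA : IsPerfectoid p A ϖ) (hπ : ∀ n, π (n + 1) ^ p = π n)
    (hπ0 : π 0 = ϖ * v) {t : ℕ → A} (ht : ∀ n, t (n + 1) ^ p = t n) (ht0 : ϖ ∣ t 0) :
    ∃ q : ℕ → A, ∀ n, t n = π n * q n ∧ ϖ ∣ q (n + 1) ^ p - q n :=
  exists_seq_of_exists_succ (P := fun n a ↦ t n = π n * a) (r := fun b a ↦ ϖ ∣ b ^ p - a)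
    (dvd_of_dvd_pow_pow hA hπ hπ0 0 (by simpa using ht0))
    fun _ _ ↦ exists_quotient_succ hA hπ hπ0 ht ht0

theorem exists_lift_of_isTilt (hA : IsPerfectoid p A ϖ) [CharP (A ⧸ span {(p : A)}) p]
    {ϖb : Perfection (A ⧸ span {(p : A)}) p} (hϖb : IsTilt p A ϖ ϖb) :
    ∃ π : ℕ → A, (∀ n, π (n + 1) ^ p = π n) ∧ (∃ v : Aˣ, π 0 = ϖ * v) ∧
      ∀ n, Ideal.Quotient.mk _ (π n) = coeff _ p n ϖb := by
  have := hA.isAdicComplete_span_natCast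
  have := hA.complete
  obtain ⟨u, hu⟩ := hϖb
  set x := (quotientMulEquiv p (span {(p : A)})).symm ϖb
  refine ⟨fun n ↦ coeffMonoidHom A p n x, coeffMonoidHom_pow_p' x, ?_,
    mk_coeff_quotientMulEquiv_symm ϖb⟩
  obtain ⟨a, ha⟩ : ϖ ^ 2 ∣ coeffMonoidHom A p 0 x - u * ϖ := by
    refine (pow_dvd_pow ϖ (Fact.out : p.Prime).two_le).trans (hA.pow_dvd.trans ?_)
    rw [← mem_span_singleton, ← Ideal.Quotient.eq, mk_coeff_quotientMulEquiv_symm, hu]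
  have hunit := IsAdicComplete.isUnit_add_of_mem u.isUnit
    (mem_span_singleton.mpr (dvd_mul_right ϖ a))
  refine ⟨hunit.unit, ?_⟩
  rw [IsUnit.unit_spec]
  linear_combination ha

variable [CharP (A ⧸ span {ϖ}) p] {ϖ' : Perfection (A ⧸ span {ϖ}) p}

theorem dvd_of_coeff_zero_eq_zero (hA : IsPerfectoid p A ϖ) (hπ : ∀ n, π (n + 1) ^ p = π n)
    (hπ0 : π 0 = ϖ * v) (hπϖ' : ∀ n, Ideal.Quotient.mk _ (π n) = coeff _ p n ϖ')
    {y : Perfection (A ⧸ span {ϖ}) p} (hy : coeff _ p 0 y = 0) : ϖ' ∣ y := by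
  have := hA.complete
  have ht := mk_coeff_quotientMulEquiv_symm y
  obtain ⟨q, hq⟩ := exists_compatible_quotients hA hπ hπ0
    (t := fun n ↦ coeffMonoidHom A p n ((quotientMulEquiv p (span {ϖ})).symm y))
    (coeffMonoidHom_pow_p' _)
    (by rw [← mem_span_singleton, ← Quotient.eq_zero_iff_mem, ht, hy])
  let q' : Perfection (A ⧸ span {ϖ}) p := ⟨fun n ↦ Ideal.Quotient.mk _ (q n), fun n ↦ by
    rw [← map_pow]
    exact Ideal.Quotient.eq.mpr (mem_span_singleton.mpr (hq n).2)⟩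
  refine ⟨q', ext fun n ↦ ?_⟩
  rw [map_mul, ← hπϖ', ← ht, coeff_mk, ← map_mul, ← (hq n).1]

theorem pow_pow_dvd_iff_coeff_eq_zero (hA : IsPerfectoid p A ϖ) (hπ : ∀ n, π (n + 1) ^ p = π n)
    (hπ0 : π 0 = ϖ * v) (hπϖ' : ∀ n, Ideal.Quotient.mk _ (π n) = coeff _ p n ϖ') (n : ℕ)
    (y : Perfection (A ⧸ span {ϖ}) p) : ϖ' ^ p ^ n ∣ y ↔ coeff _ p n y = 0 := by
  constructor
  · rintro ⟨w, rfl⟩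
    rw [map_mul, map_pow, ← coeffMonoidHom_eq_coeff, coeffMonoidHom_pow_p_pow_self,
      coeffMonoidHom_eq_coeff, ← hπϖ', hπ0, map_mul, Quotient.eq_zero_iff_mem.mpr
      (mem_span_singleton_self ϖ), zero_mul, zero_mul]
  · intro hy
    set z := (frobeniusEquiv _ p).symm^[n] y
    have hz : z ^ p ^ n = y := by
      ext k
      simp [z]
    rw [← hz]
    exact pow_dvd_pow_of_dvd
      (dvd_of_coeff_zero_eq_zero hA hπ hπ0 hπϖ' (by simpa [z] using hy)) _

end IsPerfectoid

theorem tilt_is_adic_complete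
    (p : ℕ) [Fact p.Prime] (A : Type) [CommRing A] (ϖ : A)
    [CharP (A ⧸ Ideal.span {(p : A)}) p]
    (hA : IsPerfectoid p A ϖ)
    (ϖb : Perfection (A ⧸ Ideal.span {(p : A)}) p)
    (hϖb : IsTilt p A ϖ ϖb) :
    IsAdicComplete (Ideal.span {ϖb}) (Perfection (A ⧸ Ideal.span {(p : A)}) p) := by
  have := hA.complete
  have := hA.isAdicComplete_span_natCast
  have := hA.charP_quotient
  let Φ := RingEquiv.ofBijective _
    (bijective_map_factor (p := p) (span_singleton_le_span_singleton.mpr hA.dvd_natCast))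
  obtain ⟨π, hπ, ⟨v, hπ0⟩, hπϖb⟩ := hA.exists_lift_of_isTilt hϖb
  have hπΦ (n : ℕ) : Ideal.Quotient.mk _ (π n) = coeff _ p n (Φ ϖb) := by
    simp [Φ, ← hπϖb]
  rw [← IsAdicComplete.congr_ringEquiv _ Φ, map_span, Set.image_singleton]
  exact isAdicComplete_of_pow_dvd_iff (hA.pow_pow_dvd_iff_coeff_eq_zero hπ hπ0 hπΦ)
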